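/- (Spectral lower bound for RatioCut) For every partition A₁,…,A_k of {1,…,n} into nonempty sets, RatioCut(A₁,…,A_k) ≥ μ₁ + μ₂ + … + μ_k, where μ₁ ≤ … ≤ μ_n are the eigenvalues of the unnormalized graph Laplacian L = D − W listed with multiplicity. -/

import Mathlib

open Matrix BigOperators Finset

/-!
Ky Fan's minimum principle: for orthonormal `v₁, …, v_k`, `∑ ⟪v_j, L v_j⟫ ≥ μ₁ + ⋯ + μ_k`.
Expanding in the eigenbasis, the left side is `∑ i, μ i * t i` with weights
`t i = ∑ j, ⟪u i, v j⟫²` lying in `[0, 1]` (Bessel) and summing to `k` (Parseval), and such a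
weighted sum is smallest when all the weight sits on the `k` smallest eigenvalues. Apply this
to the normalized indicators `1_{A_j} / √|A_j|`: they are orthonormal because the `A_j` are
disjoint and nonempty, and the Rayleigh quotient of `1_A / √|A|` is `cut A / |A|`.
-/

theorem sum_le_sum_mul_of_threshold {ι : Type*} [Fintype ι] (S : Finset ι) {μ t : ι → ℝ}
    (c : ℝ) (hS : ∀ i ∈ S, μ i ≤ c) (hSc : ∀ i ∉ S, c ≤ μ i)
    (ht0 : ∀ i, 0 ≤ t i) (ht1 : ∀ i, t i ≤ 1) (hts : ∑ i, t i = #S) :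
    ∑ i ∈ S, μ i ≤ ∑ i, μ i * t i := by
  classical
  have hnonneg : 0 ≤ ∑ i, (μ i - c) * (t i - if i ∈ S then 1 else 0) := by
    refine sum_nonneg fun i _ => ?_
    split_ifs with hi
    · exact mul_nonneg_of_nonpos_of_nonpos (by linarith [hS i hi]) (by linarith [ht1 i])
    · exact mul_nonneg (by linarith [hSc i hi]) (by linarith [ht0 i])
  have hexpand : ∑ i, (μ i - c) * (t i - if i ∈ S then 1 else 0)
      = ∑ i, μ i * t i - ∑ i ∈ S, μ i - c * (∑ i, t i - #S) := by
    simp only [mul_sub, sub_mul, sum_sub_distrib, mul_ite, mul_one, mul_zero, sum_ite_mem,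
      univ_inter, ← mul_sum, sum_const, nsmul_eq_mul]
    ring
  rw [hexpand, hts] at hnonneg
  linarith

theorem Monotone.sum_castLE_le_sum_mul {n k : ℕ} (hkn : k ≤ n) {μ : Fin n → ℝ}
    (hμ : Monotone μ) {t : Fin n → ℝ} (ht0 : ∀ i, 0 ≤ t i) (ht1 : ∀ i, t i ≤ 1)
    (hts : ∑ i, t i = k) :
    ∑ i : Fin k, μ (Fin.castLE hkn i) ≤ ∑ i, μ i * t i := by
  rcases n.eq_zero_or_pos with rfl | hn
  · obtain rfl : k = 0 := by omega
    simp
  have hmem : ∀ i : Fin n, i ∈ univ.map (Fin.castLEEmb hkn) ↔ (i : ℕ) < k := by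
    intro i
    simp only [mem_map, mem_univ, true_and, Fin.castLEEmb_apply]
    exact ⟨by rintro ⟨a, rfl⟩; exact a.isLt, fun hi => ⟨⟨i, hi⟩, rfl⟩⟩
  have hsum : ∑ i : Fin k, μ (Fin.castLE hkn i) = ∑ i ∈ univ.map (Fin.castLEEmb hkn), μ i := by
    rw [sum_map]; rfl
  rw [hsum]
  refine sum_le_sum_mul_of_threshold _ (μ ⟨k - 1, by omega⟩) (fun i hi => hμ ?_)
    (fun i hi => hμ ?_) ht0 ht1 (by simpa using hts)
  · rw [hmem] at hi; rw [Fin.le_def]; dsimp; omega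
  · rw [hmem] at hi; rw [Fin.le_def]; dsimp; omega

section InnerProductSpace

variable {E : Type*} [NormedAddCommGroup E] [InnerProductSpace ℝ E]

theorem OrthonormalBasis.inner_map_self_eq_sum {ι : Type*} [Fintype ι]
    (b : OrthonormalBasis ι ℝ E) {T : E →ₗ[ℝ] E} {μ : ι → ℝ}
    (hT : ∀ i, T (b i) = μ i • b i) (x : E) : inner ℝ x (T x) = ∑ i, μ i * inner ℝ (b i) x ^ 2 := by
  have hTx : T x = ∑ i, (inner ℝ (b i) x * μ i) • b i := by
    conv_lhs => rw [← b.sum_repr' x]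
    simp only [map_sum, map_smul, hT, smul_smul]
  simp only [hTx, inner_sum, inner_smul_right, real_inner_comm x]
  exact sum_congr rfl fun i _ => by ring

theorem OrthonormalBasis.sum_castLE_le_sum_inner_map_self {n k : ℕ} (hkn : k ≤ n)
    (b : OrthonormalBasis (Fin n) ℝ E) {T : E →ₗ[ℝ] E} {μ : Fin n → ℝ} (hμ : Monotone μ)
    (hT : ∀ i, T (b i) = μ i • b i) {v : Fin k → E} (hv : Orthonormal ℝ v) :
    ∑ i : Fin k, μ (Fin.castLE hkn i) ≤ ∑ j, inner ℝ (v j) (T (v j)) := by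
  have hbessel : ∀ i, ∑ j, inner ℝ (b i) (v j) ^ 2 ≤ 1 := by
    intro i
    simpa [real_inner_comm] using hv.sum_inner_products_le (b i) (s := univ)
  have hparseval : ∑ i, ∑ j, inner ℝ (b i) (v j) ^ 2 = k := by
    have hnorm : ∀ j, ∑ i, inner ℝ (b i) (v j) ^ 2 = 1 := fun j => by
      simpa [sq, real_inner_comm (v j), hv.1 j] using b.sum_inner_mul_inner (v j) (v j)
    rw [sum_comm]
    simp [hnorm]
  calc ∑ i : Fin k, μ (Fin.castLE hkn i)
      ≤ ∑ i, μ i * ∑ j, inner ℝ (b i) (v j) ^ 2 :=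
        hμ.sum_castLE_le_sum_mul hkn (fun i => sum_nonneg fun j _ => sq_nonneg _) hbessel
          hparseval
    _ = ∑ j, inner ℝ (v j) (T (v j)) := by
        simp_rw [b.inner_map_self_eq_sum hT, mul_sum]
        exact sum_comm

end InnerProductSpace

section GraphLaplacian

open Function

variable {ι : Type*} [Fintype ι] [DecidableEq ι]

def graphLaplacian (W : Matrix ι ι ℝ) : Matrix ι ι ℝ :=
  diagonal (fun i => ∑ j, W i j) - W

theorem indicator_dotProduct_indicator (A B : Finset ι) :
    (A : Set ι).indicator 1 ⬝ᵥ (B : Set ι).indicator (1 : ι → ℝ) = #(A ∩ B) := by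
  simp [dotProduct, Set.indicator_apply, sum_ite_mem, inter_comm]

theorem indicator_dotProduct_graphLaplacian_mulVec_indicator (W : Matrix ι ι ℝ) (A : Finset ι) :
    (A : Set ι).indicator 1 ⬝ᵥ (graphLaplacian W *ᵥ (A : Set ι).indicator 1)
      = ∑ i ∈ A, ∑ l ∈ Aᶜ, W i l := by
  simp only [dotProduct, mulVec, Set.indicator_apply, mem_coe, Pi.one_apply, mul_ite, mul_one,
    mul_zero, ite_mul, one_mul, zero_mul, sum_ite_mem, univ_inter]
  refine sum_congr rfl fun i hi => ?_
  simp only [graphLaplacian, Matrix.sub_apply, sum_sub_distrib, diagonal_apply, sum_ite_eq,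
    if_pos hi, ← sum_add_sum_compl A (W i)]
  ring

noncomputable def normalizedIndicator (A : Finset ι) : EuclideanSpace ℝ ι :=
  (√(#A : ℝ))⁻¹ • WithLp.toLp 2 ((A : Set ι).indicator 1)

theorem orthonormal_normalizedIndicator {κ : Type*} {A : κ → Finset ι}
    (hne : ∀ j, (A j).Nonempty) (hdisj : Pairwise (Disjoint on A)) :
    Orthonormal ℝ (fun j => normalizedIndicator (A j)) := by
  classical
  rw [orthonormal_iff_ite]
  intro j j'
  simp only [normalizedIndicator, real_inner_smul_left, real_inner_smul_right,
    EuclideanSpace.inner_toLp_toLp, star_trivial, indicator_dotProduct_indicator]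
  split_ifs with h
  · subst h
    have hpos : (0 : ℝ) < #(A j) := by exact_mod_cast (hne j).card_pos
    rw [inter_self, ← mul_assoc, ← mul_inv, Real.mul_self_sqrt hpos.le,
      inv_mul_cancel₀ hpos.ne']
  · simp [disjoint_iff_inter_eq_empty.mp (hdisj (Ne.symm h))]

theorem inner_normalizedIndicator_graphLaplacian (W : Matrix ι ι ℝ) (A : Finset ι) :
    inner ℝ (normalizedIndicator A) (toEuclideanLin (graphLaplacian W) (normalizedIndicator A))
      = (∑ i ∈ A, ∑ l ∈ Aᶜ, W i l) / #A := by
  simp only [normalizedIndicator, map_smul, real_inner_smul_left, real_inner_smul_right,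
    toLpLin_toLp, EuclideanSpace.inner_toLp_toLp, star_trivial, toLin'_apply,
    dotProduct_comm _ ((A : Set ι).indicator 1),
    indicator_dotProduct_graphLaplacian_mulVec_indicator]
  rw [← mul_assoc, ← mul_inv, Real.mul_self_sqrt (Nat.cast_nonneg _), inv_mul_eq_div]

end GraphLaplacian

theorem EuclideanSpace.orthonormal_toLp_of_dotProduct {ι : Type*} [Fintype ι] [DecidableEq ι]
    {u : ι → ι → ℝ} (hu : ∀ i j, u i ⬝ᵥ u j = if i = j then 1 else 0) :
    Orthonormal ℝ (fun i => WithLp.toLp 2 (u i)) := by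
  rw [orthonormal_iff_ite]
  intro i j
  rw [EuclideanSpace.inner_toLp_toLp, star_trivial, dotProduct_comm, hu]

theorem ratiocut_spectral_lower_bound_general
    (n k : ℕ) (hkn : k ≤ n) (W : Matrix (Fin n) (Fin n) ℝ)
    (d : Fin n → ℝ) (hd : ∀ i, d i = ∑ j, W i j)
    (L : Matrix (Fin n) (Fin n) ℝ) (hLdef : L = Matrix.diagonal d - W)
    (μ : Fin n → ℝ) (hmono : Monotone μ)
    (u : Fin n → (Fin n → ℝ))
    (horth : ∀ i j, u i ⬝ᵥ u j = if i = j then (1 : ℝ) else 0)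
    (heig : ∀ i, L *ᵥ u i = μ i • u i)
    (A : Fin k → Finset (Fin n))
    (hne : ∀ j, (A j).Nonempty)
    (hdisj : ∀ j j', j ≠ j' → Disjoint (A j) (A j')) :
    ∑ i : Fin k, μ (Fin.castLE hkn i) ≤
      ∑ j : Fin k, (∑ i ∈ A j, ∑ l ∈ (A j)ᶜ, W i l) / ((A j).card : ℝ) := by
  obtain rfl : d = fun i => ∑ j, W i j := funext hd
  have hu := EuclideanSpace.orthonormal_toLp_of_dotProduct horth
  let b : OrthonormalBasis (Fin n) ℝ (EuclideanSpace ℝ (Fin n)) :=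
    .mk hu (hu.linearIndependent.span_eq_top_of_card_eq_finrank' (by simp)).ge
  have hb : ∀ i, toEuclideanLin L (b i) = μ i • b i := fun i => by
    simp [b, toLpLin_toLp, heig]
  calc ∑ i : Fin k, μ (Fin.castLE hkn i)
      ≤ ∑ j, inner ℝ (normalizedIndicator (A j))
          (toEuclideanLin L (normalizedIndicator (A j))) :=
        b.sum_castLE_le_sum_inner_map_self hkn hmono hb
          (orthonormal_normalizedIndicator hne fun j j' => hdisj j j')
    _ = _ := by
        subst hLdef
        exact sum_congr rfl fun j _ => inner_normalizedIndicator_graphLaplacian W (A j)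

/-- **Spectral lower bound for RatioCut.**
For every partition `A 0, …, A (k-1)` of `{1,…,n}` into nonempty sets,
`RatioCut (A 0, …, A (k-1)) = ∑ j, cut (A j) / |A j| ≥ μ 0 + ⋯ + μ (k-1)`, where
`μ 0 ≤ … ≤ μ (n-1)` are the eigenvalues of the unnormalized graph Laplacian `L = D - W`
listed with multiplicity (witnessed by an orthonormal eigenbasis `u`). -/
theorem ratiocut_spectral_lower_bound
    (n k : ℕ) (hkn : k ≤ n) (W : Matrix (Fin n) (Fin n) ℝ)
    (hWsymm : W.IsSymm) (hWnn : ∀ i j, 0 ≤ W i j)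
    (d : Fin n → ℝ) (hd : ∀ i, d i = ∑ j, W i j)
    (L : Matrix (Fin n) (Fin n) ℝ) (hLdef : L = Matrix.diagonal d - W)
    (μ : Fin n → ℝ) (hmono : Monotone μ)
    (u : Fin n → (Fin n → ℝ))
    (horth : ∀ i j, u i ⬝ᵥ u j = if i = j then (1 : ℝ) else 0)
    (heig : ∀ i, L *ᵥ u i = μ i • u i)
    (A : Fin k → Finset (Fin n))
    (hne : ∀ j, (A j).Nonempty)
    (hdisj : ∀ j j', j ≠ j' → Disjoint (A j) (A j'))
    (hcover : ∀ i : Fin n, ∃ j, i ∈ A j) :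
    ∑ i : Fin k, μ (Fin.castLE hkn i) ≤
      ∑ j : Fin k, (∑ i ∈ A j, ∑ l ∈ (A j)ᶜ, W i l) / ((A j).card : ℝ) :=
  ratiocut_spectral_lower_bound_general n k hkn W d hd L hLdef μ hmono u horth heig A hne hdisj
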